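/- arXiv:2111.09795 — 2 statements merged into one kernel-verified Lean document; each statement's English description precedes it below -/
import Mathlib

section
/- For γ ≤ 0 and u ≠ 0, the quantity Δ = 16u²(-16u⁴ + (36γ - 27 - 8γ²)u² + γ³(1-γ)) is strictly negative. -/
/-- For `γ ≤ 0` and `u ≠ 0`, the discriminant of the plasmon quartic is strictly negative. -/
theorem plasmon_discriminant_neg_of_gamma_nonpos (γ u : ℝ) (hγ : γ ≤ 0) (hu : u ≠ 0) :
    16 * u ^ 2 * (-16 * u ^ 4 + (36 * γ - 27 - 8 * γ ^ 2) * u ^ 2 + γ ^ 3 * (1 - γ)) < 0 := by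
  have hu2 : 0 < u ^ 2 := by positivity
  have h1 : (36 * γ - 27 - 8 * γ ^ 2) * u ^ 2 < 0 := by nlinarith [sq_nonneg γ]
  have h2 : γ ^ 3 * (1 - γ) ≤ 0 := by nlinarith [sq_nonneg γ]
  nlinarith [pow_pos hu2 2, sq_nonneg (u^2)]
end

section
/- Let σ(ω) = σ₀/(1 + iωτ) and consider the pole equation 1 = μ₀σ(ω)β c²/(2ω) with β = β(ω,k). Under the substitution ω = is/τ and with η = μ₀σ₀c/2, ℓ₀ = ηcτ, γ = 1 - η², and β² = ω²/c² - k², the pole equation is equivalent to the quartic s⁴ - 2s³ + γs² - (kℓ₀)² = 0 (for s ≠ 1 and appropriate branch of β). -/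
open Complex

/-- The pole equation `1 = μ₀σ(ω)βc²/(2ω)` of the transmission coefficient, under the
substitution `ω = is/τ` (so `σ(ω) = σ₀/(1-s)`) and with `β² = ω²/c² - k²`, is equivalent
after squaring to the plasmon quartic `s⁴ - 2s³ + γs² - (kℓ₀)² = 0`. -/
theorem pole_equation_quartic (μ₀ σ₀ c τ k η ℓ₀ γ : ℝ)
    (hμ₀ : 0 < μ₀) (hσ₀ : 0 < σ₀) (hc : 0 < c) (hτ : 0 < τ)
    (hη : η = μ₀ * σ₀ * c / 2) (hℓ₀ : ℓ₀ = η * c * τ) (hγ : γ = 1 - η ^ 2)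
    (s β : ℂ) (hs0 : s ≠ 0) (hs1 : s ≠ 1)
    (hβ : β ^ 2 = (Complex.I * s / (τ : ℂ)) ^ 2 / (c : ℂ) ^ 2 - (k : ℂ) ^ 2)
    (hpole : (1 : ℂ) = (μ₀ : ℂ) * ((σ₀ : ℂ) / (1 - s)) * β * (c : ℂ) ^ 2 /
      (2 * (Complex.I * s / (τ : ℂ)))) :
    s ^ 4 - 2 * s ^ 3 + (γ : ℂ) * s ^ 2 - ((k * ℓ₀ : ℝ) : ℂ) ^ 2 = 0 := by
  have hτ' : (τ : ℂ) ≠ 0 := Complex.ofReal_ne_zero.mpr hτ.ne'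
  have hc' : (c : ℂ) ≠ 0 := Complex.ofReal_ne_zero.mpr hc.ne'
  have h1s : (1 : ℂ) - s ≠ 0 := sub_ne_zero.mpr (Ne.symm hs1)
  have hI : Complex.I ≠ 0 := Complex.I_ne_zero
  field_simp at hpole hβ
  subst hη hℓ₀ hγ
  push_cast
  linear_combination (-(1/4:ℂ)) * ((1-s)*(2*(Complex.I*s)) + (μ₀:ℂ)*(σ₀:ℂ)*β*(c:ℂ)^2*(τ:ℂ)) * hpole - ((μ₀:ℂ)^2*(σ₀:ℂ)^2*(c:ℂ)^2/4) * hβ + (s^4 - 2*s^3 + s^2*(1 - (μ₀:ℂ)^2*(σ₀:ℂ)^2*(c:ℂ)^2/4)) * Complex.I_sq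
end
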